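/- arXiv:1608.03818 — 2 statements merged into one kernel-verified Lean document; each statement's English description precedes it below -/
import Mathlib

section
/- Let H be a real Hilbert space, a, b > 0 constants, and p, u : [0,T] → H continuously differentiable with a⟨p'(t), p(t)⟩ + b⟨u'(t), u(t)⟩ ≤ (‖f(t)‖·‖p(t)‖ + ‖g(t)‖·‖u(t)‖) for continuous f, g. Then √(a‖p(t)‖² + b‖u(t)‖²) ≤ √(a‖p(0)‖² + b‖u(0)‖²) + max(a⁻¹ᐟ², b⁻¹ᐟ²)·∫₀ᵗ (‖f(s)‖ + ‖g(s)‖) ds. -/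
open scoped RealInnerProductSpace

/-!
Regularise the energy to `E_ε = √(a‖p‖² + b‖u‖² + ε²)`, which, unlike `E`, is differentiable
everywhere, with `E_ε' = (a⟪p', p⟫ + b⟪u', u⟫) / E_ε`. Since `√a ‖p‖` and `√b ‖u‖` are both at
most `E_ε`, the hypothesis bounds `E_ε'` by `max (√a)⁻¹ (√b)⁻¹ * (‖f‖ + ‖g‖)`; integrating this
derivative bound and using `E_ε(0) ≤ E(0) + ε` gives the estimate up to `ε`, which is arbitrary.
-/

lemma sqrt_add_sq_le_sqrt_add {x ε : ℝ} (hx : 0 ≤ x) (hε : 0 ≤ ε) : √(x + ε ^ 2) ≤ √x + ε :=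
  Real.sqrt_le_iff.2 ⟨by positivity, by nlinarith [Real.sq_sqrt hx, Real.sqrt_nonneg x]⟩

lemma le_inv_sqrt_mul_of_mul_sq_le {a r c : ℝ} (ha : 0 < a) (hc : 0 ≤ c)
    (h : a * r ^ 2 ≤ c ^ 2) : r ≤ (√a)⁻¹ * c := by
  have hsa : 0 < √a := Real.sqrt_pos.2 ha
  have hsq : (√a * r) ^ 2 ≤ c ^ 2 := by rwa [mul_pow, Real.sq_sqrt ha.le]
  rw [inv_mul_eq_div, le_div_iff₀ hsa, mul_comm]
  exact (le_abs_self _).trans (abs_le_of_sq_le_sq hsq hc)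

lemma div_sqrt_weighted_sq_add_le {a b δ r s q F G : ℝ} (ha : 0 < a) (hb : 0 < b) (hδ : 0 < δ)
    (hF : 0 ≤ F) (hG : 0 ≤ G) (hq : q ≤ F * r + G * s) :
    q / √(a * r ^ 2 + b * s ^ 2 + δ) ≤ max (√a)⁻¹ (√b)⁻¹ * (F + G) := by
  set E := √(a * r ^ 2 + b * s ^ 2 + δ)
  have hE : 0 < E := Real.sqrt_pos.2 (by positivity)
  have hE2 : E ^ 2 = a * r ^ 2 + b * s ^ 2 + δ := Real.sq_sqrt (by positivity)
  have hr' : r ≤ max (√a)⁻¹ (√b)⁻¹ * E :=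
    (le_inv_sqrt_mul_of_mul_sq_le ha hE.le (by nlinarith)).trans
      (by gcongr; exact le_max_left _ _)
  have hs' : s ≤ max (√a)⁻¹ (√b)⁻¹ * E :=
    (le_inv_sqrt_mul_of_mul_sq_le hb hE.le (by nlinarith)).trans
      (by gcongr; exact le_max_right _ _)
  rw [div_le_iff₀ hE]
  calc q ≤ F * r + G * s := hq
    _ ≤ F * (max (√a)⁻¹ (√b)⁻¹ * E) + G * (max (√a)⁻¹ (√b)⁻¹ * E) := by gcongr
    _ = max (√a)⁻¹ (√b)⁻¹ * (F + G) * E := by ring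

lemma hasDerivAt_sqrt_weighted_norm_sq_add {H : Type*} [NormedAddCommGroup H]
    [InnerProductSpace ℝ H]
    {p u : ℝ → H} {p' u' : H} {a b δ t : ℝ} (ha : 0 ≤ a) (hb : 0 ≤ b) (hδ : 0 < δ)
    (hp : HasDerivAt p p' t) (hu : HasDerivAt u u' t) :
    HasDerivAt (fun s => √(a * ‖p s‖ ^ 2 + b * ‖u s‖ ^ 2 + δ))
      ((a * ⟪p', p t⟫ + b * ⟪u', u t⟫) / √(a * ‖p t‖ ^ 2 + b * ‖u t‖ ^ 2 + δ)) t := by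
  have hN : HasDerivAt (fun s => a * ‖p s‖ ^ 2 + b * ‖u s‖ ^ 2 + δ)
      (a * (2 * ⟪p t, p'⟫) + b * (2 * ⟪u t, u'⟫)) t :=
    ((hp.norm_sq.const_mul a).add (hu.norm_sq.const_mul b)).add_const δ
  convert hN.sqrt (by positivity) using 1
  rw [real_inner_comm p', real_inner_comm u']
  field_simp

theorem stmt_1_general
    {H : Type*} [NormedAddCommGroup H] [InnerProductSpace ℝ H]
    (T a b : ℝ) (ha : 0 < a) (hb : 0 < b)
    (p u p' u' f g : ℝ → H)
    (hp : ∀ t, HasDerivAt p (p' t) t) (hu : ∀ t, HasDerivAt u (u' t) t)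
    (hf : Continuous f) (hg : Continuous g)
    (hsys : ∀ t, a * ⟪p' t, p t⟫ + b * ⟪u' t, u t⟫ ≤ ‖f t‖ * ‖p t‖ + ‖g t‖ * ‖u t‖) :
    ∀ t ∈ Set.Icc (0 : ℝ) T,
      Real.sqrt (a * ‖p t‖ ^ 2 + b * ‖u t‖ ^ 2) ≤
        Real.sqrt (a * ‖p 0‖ ^ 2 + b * ‖u 0‖ ^ 2) +
          max (Real.sqrt a)⁻¹ (Real.sqrt b)⁻¹ * ∫ s in (0 : ℝ)..t, (‖f s‖ + ‖g s‖) := by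
  rintro t ⟨ht0, -⟩
  refine le_of_forall_pos_le_add fun ε hε => ?_
  set E : ℝ → ℝ := fun s => √(a * ‖p s‖ ^ 2 + b * ‖u s‖ ^ 2 + ε ^ 2)
  have hE : ∀ s, HasDerivAt E _ s := fun s =>
    hasDerivAt_sqrt_weighted_norm_sq_add ha.le hb.le (by positivity) (hp s) (hu s)
  have hgrowth : E t - E 0 ≤ ∫ s in (0 : ℝ)..t, max (√a)⁻¹ (√b)⁻¹ * (‖f s‖ + ‖g s‖) :=
    intervalIntegral.sub_le_integral_of_hasDeriv_right_of_le ht0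
      (fun s _ => (hE s).continuousAt.continuousWithinAt)
      (fun s _ => (hE s).hasDerivWithinAt)
      ((continuous_const.mul (hf.norm.add hg.norm)).integrableOn_Icc)
      (fun s _ => div_sqrt_weighted_sq_add_le ha hb (by positivity) (norm_nonneg _)
        (norm_nonneg _) (hsys s))
  rw [intervalIntegral.integral_const_mul] at hgrowth
  have hEt : √(a * ‖p t‖ ^ 2 + b * ‖u t‖ ^ 2) ≤ E t :=
    Real.sqrt_le_sqrt (le_add_of_nonneg_right (sq_nonneg ε))
  have hE0 : E 0 ≤ √(a * ‖p 0‖ ^ 2 + b * ‖u 0‖ ^ 2) + ε :=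
    sqrt_add_sq_le_sqrt_add (by positivity) hε.le
  linarith

theorem stmt_1
    {H : Type*} [NormedAddCommGroup H] [InnerProductSpace ℝ H] [CompleteSpace H]
    (T a b : ℝ) (hT : 0 < T) (ha : 0 < a) (hb : 0 < b)
    (p u p' u' f g : ℝ → H)
    (hp : ∀ t, HasDerivAt p (p' t) t) (hu : ∀ t, HasDerivAt u (u' t) t)
    (hp' : Continuous p') (hu' : Continuous u')
    (hf : Continuous f) (hg : Continuous g)
    (hsys : ∀ t, a * ⟪p' t, p t⟫ + b * ⟪u' t, u t⟫ ≤ ‖f t‖ * ‖p t‖ + ‖g t‖ * ‖u t‖) :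
    ∀ t ∈ Set.Icc (0 : ℝ) T,
      Real.sqrt (a * ‖p t‖ ^ 2 + b * ‖u t‖ ^ 2) ≤
        Real.sqrt (a * ‖p 0‖ ^ 2 + b * ‖u 0‖ ^ 2) +
          max (Real.sqrt a)⁻¹ (Real.sqrt b)⁻¹ * ∫ s in (0 : ℝ)..t, (‖f s‖ + ‖g s‖) :=
  stmt_1_general T a b ha hb p u p' u' f g hp hu hf hg hsys
end

section
/- Let a, b > 0 and let Q, V be finite-dimensional real inner product spaces with a linear map D : V → Q (the discrete divergence) and its adjoint-type pairing: suppose sequences p⁰,…,p^N ∈ Q and u⁰,…,u^N ∈ V satisfy, for all n ≥ 1, a⟨(pⁿ − pⁿ⁻¹)/τ, q⟩ + ⟨D((uⁿ+uⁿ⁻¹)/2), q⟩ = ⟨fⁿ, q⟩ for all q ∈ Q, and b⟨(uⁿ − uⁿ⁻¹)/τ, v⟩ − ⟨(pⁿ+pⁿ⁻¹)/2, Dv⟩ = ⟨gⁿ, v⟩ for all v ∈ V. Then for all n, a‖pⁿ‖² + b‖uⁿ‖² ≤ (√(a‖p⁰‖² + b‖u⁰‖²) + max(a⁻¹ᐟ²,b⁻¹ᐟ²)·Σ_{k=1}^{n}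 τ(‖f^k‖ + ‖g^k‖))². -/
/-! Testing the first equation with `pⁿ + pⁿ⁻¹` and the second with `uⁿ + uⁿ⁻¹` makes the coupling
terms `⟪D(uⁿ + uⁿ⁻¹), pⁿ + pⁿ⁻¹⟫` cancel, so the energy `Eₙ² = a‖pⁿ‖² + b‖uⁿ‖²` satisfies
`Eₙ² - Eₙ₋₁² = τ (⟪fⁿ, pⁿ + pⁿ⁻¹⟫ + ⟪gⁿ, uⁿ + uⁿ⁻¹⟫)`. By Cauchy–Schwarz the right-hand side is at most
`M τ (‖fⁿ‖ + ‖gⁿ‖) (Eₙ + Eₙ₋₁)` with `M = max a^{-1/2} b^{-1/2}`; dividing by `Eₙ + Eₙ₋₁` gives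
`Eₙ ≤ Eₙ₋₁ + M τ (‖fⁿ‖ + ‖gⁿ‖)`, which telescopes. -/

open scoped RealInnerProductSpace

theorem real_inner_sub_add {E : Type*} [NormedAddCommGroup E] [InnerProductSpace ℝ E] (x y : E) :
    ⟪x - y, x + y⟫ = ‖x‖ ^ 2 - ‖y‖ ^ 2 := by
  rw [inner_sub_left, inner_add_right, inner_add_right, real_inner_self_eq_norm_sq,
    real_inner_self_eq_norm_sq, real_inner_comm y x]
  ring

theorem le_inv_sqrt_mul_sqrt_of_mul_sq_le {a r s : ℝ} (ha : 0 < a) (hr : 0 ≤ r)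
    (h : a * r ^ 2 ≤ s) : r ≤ (Real.sqrt a)⁻¹ * Real.sqrt s := by
  rw [le_inv_mul_iff₀ (Real.sqrt_pos.mpr ha)]
  simpa [Real.sqrt_mul ha.le, Real.sqrt_sq hr] using Real.sqrt_le_sqrt h

theorem le_max_inv_sqrt_mul_sqrt {a b r s : ℝ} (ha : 0 < a) (hb : 0 < b) (hr : 0 ≤ r)
    (hs : 0 ≤ s) :
    r ≤ max (Real.sqrt a)⁻¹ (Real.sqrt b)⁻¹ * Real.sqrt (a * r ^ 2 + b * s ^ 2) ∧
      s ≤ max (Real.sqrt a)⁻¹ (Real.sqrt b)⁻¹ * Real.sqrt (a * r ^ 2 + b * s ^ 2) := by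
  have hE := Real.sqrt_nonneg (a * r ^ 2 + b * s ^ 2)
  constructor
  · calc r ≤ (Real.sqrt a)⁻¹ * Real.sqrt (a * r ^ 2 + b * s ^ 2) :=
          le_inv_sqrt_mul_sqrt_of_mul_sq_le ha hr (by nlinarith)
      _ ≤ _ := mul_le_mul_of_nonneg_right (le_max_left _ _) hE
  · calc s ≤ (Real.sqrt b)⁻¹ * Real.sqrt (a * r ^ 2 + b * s ^ 2) :=
          le_inv_sqrt_mul_sqrt_of_mul_sq_le hb hs (by nlinarith)
      _ ≤ _ := mul_le_mul_of_nonneg_right (le_max_right _ _) hE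

theorem le_add_of_sq_sub_sq_le_mul_add {x y c : ℝ} (hy : 0 ≤ y) (hc : 0 ≤ c)
    (h : x ^ 2 - y ^ 2 ≤ c * (x + y)) : x ≤ y + c := by
  nlinarith

theorem le_add_sum_Icc_of_le_add {e c : ℕ → ℝ} {N : ℕ}
    (h : ∀ n, 1 ≤ n → n ≤ N → e n ≤ e (n - 1) + c n) :
    ∀ n ≤ N, e n ≤ e 0 + ∑ k ∈ Finset.Icc 1 n, c k := by
  intro n
  induction n with
  | zero => simp
  | succ n ih =>
    intro hn
    rw [Finset.sum_Icc_succ_top (by omega)]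
    have hstep := h (n + 1) (by omega) hn
    rw [Nat.add_sub_cancel] at hstep
    linarith [ih (by omega)]

namespace CrankNicolson

variable {Q V : Type*} [NormedAddCommGroup Q] [InnerProductSpace ℝ Q]
  [NormedAddCommGroup V] [InnerProductSpace ℝ V]

theorem energy_sub_energy {a b τ : ℝ} (hτ : τ ≠ 0) (D : V →ₗ[ℝ] Q) {p₀ p₁ f : Q} {u₀ u₁ g : V}
    (hp : ∀ q : Q, a * ⟪τ⁻¹ • (p₁ - p₀), q⟫ + ⟪D ((2 : ℝ)⁻¹ • (u₁ + u₀)), q⟫ = ⟪f, q⟫)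
    (hu : ∀ v : V, b * ⟪τ⁻¹ • (u₁ - u₀), v⟫ - ⟪(2 : ℝ)⁻¹ • (p₁ + p₀), D v⟫ = ⟪g, v⟫) :
    (a * ‖p₁‖ ^ 2 + b * ‖u₁‖ ^ 2) - (a * ‖p₀‖ ^ 2 + b * ‖u₀‖ ^ 2) =
      τ * (⟪f, p₁ + p₀⟫ + ⟪g, u₁ + u₀⟫) := by
  have ep := hp (p₁ + p₀)
  have eu := hu (u₁ + u₀)
  rw [real_inner_smul_left, real_inner_sub_add, map_smul, real_inner_smul_left,
    real_inner_comm] at ep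
  rw [real_inner_smul_left, real_inner_sub_add, real_inner_smul_left] at eu
  rw [← ep, ← eu]
  field_simp
  ring

theorem sqrt_energy_le {a b τ : ℝ} (ha : 0 < a) (hb : 0 < b) (hτ : 0 < τ) (D : V →ₗ[ℝ] Q)
    {p₀ p₁ f : Q} {u₀ u₁ g : V}
    (hp : ∀ q : Q, a * ⟪τ⁻¹ • (p₁ - p₀), q⟫ + ⟪D ((2 : ℝ)⁻¹ • (u₁ + u₀)), q⟫ = ⟪f, q⟫)
    (hu : ∀ v : V, b * ⟪τ⁻¹ • (u₁ - u₀), v⟫ - ⟪(2 : ℝ)⁻¹ • (p₁ + p₀), D v⟫ = ⟪g, v⟫) :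
    Real.sqrt (a * ‖p₁‖ ^ 2 + b * ‖u₁‖ ^ 2) ≤
      Real.sqrt (a * ‖p₀‖ ^ 2 + b * ‖u₀‖ ^ 2) +
        max (Real.sqrt a)⁻¹ (Real.sqrt b)⁻¹ * (τ * (‖f‖ + ‖g‖)) := by
  set M := max (Real.sqrt a)⁻¹ (Real.sqrt b)⁻¹
  set E₀ := Real.sqrt (a * ‖p₀‖ ^ 2 + b * ‖u₀‖ ^ 2)
  set E₁ := Real.sqrt (a * ‖p₁‖ ^ 2 + b * ‖u₁‖ ^ 2)
  have hM : 0 ≤ M := le_max_of_le_left (by positivity)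
  obtain ⟨hp₀, hu₀⟩ := le_max_inv_sqrt_mul_sqrt ha hb (norm_nonneg p₀) (norm_nonneg u₀)
  obtain ⟨hp₁, hu₁⟩ := le_max_inv_sqrt_mul_sqrt ha hb (norm_nonneg p₁) (norm_nonneg u₁)
  have hforcing : ⟪f, p₁ + p₀⟫ + ⟪g, u₁ + u₀⟫ ≤ (‖f‖ + ‖g‖) * (M * (E₁ + E₀)) :=
    calc ⟪f, p₁ + p₀⟫ + ⟪g, u₁ + u₀⟫ ≤ ‖f‖ * (‖p₁‖ + ‖p₀‖) + ‖g‖ * (‖u₁‖ + ‖u₀‖) := by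
          gcongr <;> exact (real_inner_le_norm _ _).trans
            (mul_le_mul_of_nonneg_left (norm_add_le _ _) (norm_nonneg _))
      _ ≤ ‖f‖ * (M * E₁ + M * E₀) + ‖g‖ * (M * E₁ + M * E₀) := by gcongr
      _ = (‖f‖ + ‖g‖) * (M * (E₁ + E₀)) := by ring
  apply le_add_of_sq_sub_sq_le_mul_add (Real.sqrt_nonneg _) (by positivity)
  rw [Real.sq_sqrt (by positivity), Real.sq_sqrt (by positivity), energy_sub_energy hτ.ne' D hp hu]
  calc τ * (⟪f, p₁ + p₀⟫ + ⟪g, u₁ + u₀⟫) ≤ τ * ((‖f‖ + ‖g‖) * (M * (E₁ + E₀))) := by gcongr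
    _ = M * (τ * (‖f‖ + ‖g‖)) * (E₁ + E₀) := by ring

end CrankNicolson

theorem stmt_9_general
    {Q V : Type*} [NormedAddCommGroup Q] [InnerProductSpace ℝ Q]
    [NormedAddCommGroup V] [InnerProductSpace ℝ V]
    (a b τ : ℝ) (ha : 0 < a) (hb : 0 < b) (hτ : 0 < τ)
    (N : ℕ) (D : V →ₗ[ℝ] Q)
    (p f : ℕ → Q) (u g : ℕ → V)
    (h1 : ∀ n, 1 ≤ n → n ≤ N → ∀ q : Q,
      a * ⟪τ⁻¹ • (p n - p (n - 1)), q⟫ + ⟪D ((2 : ℝ)⁻¹ • (u n + u (n - 1))), q⟫ = ⟪f n, q⟫)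
    (h2 : ∀ n, 1 ≤ n → n ≤ N → ∀ v : V,
      b * ⟪τ⁻¹ • (u n - u (n - 1)), v⟫ - ⟪(2 : ℝ)⁻¹ • (p n + p (n - 1)), D v⟫ = ⟪g n, v⟫) :
    ∀ n ≤ N,
      a * ‖p n‖ ^ 2 + b * ‖u n‖ ^ 2 ≤
        (Real.sqrt (a * ‖p 0‖ ^ 2 + b * ‖u 0‖ ^ 2) +
          max (Real.sqrt a)⁻¹ (Real.sqrt b)⁻¹ *
            ∑ k ∈ Finset.Icc 1 n, τ * (‖f k‖ + ‖g k‖)) ^ 2 := by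
  intro n hn
  have hsqrt := le_add_sum_Icc_of_le_add (N := N)
    (e := fun n => Real.sqrt (a * ‖p n‖ ^ 2 + b * ‖u n‖ ^ 2))
    (c := fun k => max (Real.sqrt a)⁻¹ (Real.sqrt b)⁻¹ * (τ * (‖f k‖ + ‖g k‖)))
    (fun n hn1 hnN => CrankNicolson.sqrt_energy_le ha hb hτ D (h1 n hn1 hnN) (h2 n hn1 hnN)) n hn
  rw [← Finset.mul_sum] at hsqrt
  calc a * ‖p n‖ ^ 2 + b * ‖u n‖ ^ 2 = Real.sqrt (a * ‖p n‖ ^ 2 + b * ‖u n‖ ^ 2) ^ 2 :=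
        (Real.sq_sqrt (by positivity)).symm
    _ ≤ _ := pow_le_pow_left₀ (Real.sqrt_nonneg _) hsqrt 2

theorem stmt_9
    {Q V : Type*} [NormedAddCommGroup Q] [InnerProductSpace ℝ Q] [FiniteDimensional ℝ Q]
    [NormedAddCommGroup V] [InnerProductSpace ℝ V] [FiniteDimensional ℝ V]
    (a b τ : ℝ) (ha : 0 < a) (hb : 0 < b) (hτ : 0 < τ)
    (N : ℕ) (D : V →ₗ[ℝ] Q)
    (p f : ℕ → Q) (u g : ℕ → V)
    (h1 : ∀ n, 1 ≤ n → n ≤ N → ∀ q : Q,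
      a * ⟪τ⁻¹ • (p n - p (n - 1)), q⟫ + ⟪D ((2 : ℝ)⁻¹ • (u n + u (n - 1))), q⟫ = ⟪f n, q⟫)
    (h2 : ∀ n, 1 ≤ n → n ≤ N → ∀ v : V,
      b * ⟪τ⁻¹ • (u n - u (n - 1)), v⟫ - ⟪(2 : ℝ)⁻¹ • (p n + p (n - 1)), D v⟫ = ⟪g n, v⟫) :
    ∀ n ≤ N,
      a * ‖p n‖ ^ 2 + b * ‖u n‖ ^ 2 ≤
        (Real.sqrt (a * ‖p 0‖ ^ 2 + b * ‖u 0‖ ^ 2) +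
          max (Real.sqrt a)⁻¹ (Real.sqrt b)⁻¹ *
            ∑ k ∈ Finset.Icc 1 n, τ * (‖f k‖ + ‖g k‖)) ^ 2 :=
  stmt_9_general a b τ ha hb hτ N D p f u g h1 h2
end
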